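/- For any Borel sets U, V ⊆ ℝ^n, dim_H(U + V) ≤ dim_H(U) + dim_P(V). -/

import Mathlib

open Set Filter MeasureTheory Metric Bornology
open scoped ENNReal NNReal Topology Pointwise

noncomputable def covN {X : Type*} [PseudoMetricSpace X] (E : Set X) (δ : ℝ) : ℕ :=
  sInf {k : ℕ | ∃ S : Finset X, S.card = k ∧ E ⊆ ⋃ x ∈ S, Metric.ball x δ}

/-- Upper Minkowski (box) dimension. -/
noncomputable def ubDim {X : Type*} [PseudoMetricSpace X] (E : Set X) : ℝ≥0∞ :=
  ENNReal.ofReal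
    (Filter.limsup (fun δ : ℝ => Real.log (covN E δ) / Real.log (1 / δ)) (𝓝[>] (0:ℝ)))

/-- Packing dimension, via countable covers by bounded sets. -/
noncomputable def packDim {X : Type*} [PseudoMetricSpace X] (E : Set X) : ℝ≥0∞ :=
  ⨅ (F : ℕ → Set X) (_ : E ⊆ ⋃ i, F i) (_ : ∀ i, Bornology.IsBounded (F i)),
    ⨆ i, ubDim (F i)

lemma covN_le_card {X : Type*} [PseudoMetricSpace X] {E : Set X} {δ : ℝ} {S : Finset X}
    (h : E ⊆ ⋃ x ∈ S, Metric.ball x δ) : covN E δ ≤ S.card :=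
  Nat.sInf_le ⟨S, rfl, h⟩

lemma covN_realize {X : Type*} [PseudoMetricSpace X] [ProperSpace X] {E : Set X}
    (hE : IsBounded E) {δ : ℝ} (hδ : 0 < δ) :
    ∃ S : Finset X, S.card = covN E δ ∧ E ⊆ ⋃ x ∈ S, Metric.ball x δ := by
  have hne : {k : ℕ | ∃ S : Finset X, S.card = k ∧ E ⊆ ⋃ x ∈ S, Metric.ball x δ}.Nonempty := by
    have htb : TotallyBounded E := hE.isCompact_closure.totallyBounded.subset subset_closure
    obtain ⟨t, htf, hts⟩ := (totallyBounded_iff).1 htb δ hδ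
    exact ⟨htf.toFinset.card, htf.toFinset, rfl, by simpa using hts⟩
  obtain ⟨S, hS, hcov⟩ := Nat.sInf_mem hne
  exact ⟨S, hS, hcov⟩

lemma coord_le_norm (n : ℕ) (x : EuclideanSpace ℝ (Fin n)) (i : Fin n) : |x i| ≤ ‖x‖ := by
  rw [EuclideanSpace.norm_eq]
  have h1 : |x i| = Real.sqrt (‖x i‖ ^ 2) := by
    rw [Real.sqrt_sq_eq_abs]; simp [Real.norm_eq_abs, sq_abs]
  rw [h1]
  exact Real.sqrt_le_sqrt <|
    Finset.single_le_sum (f := fun j => ‖x j‖ ^ 2) (fun j _ => sq_nonneg _) (Finset.mem_univ i)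

lemma norm_le_of_coord (n : ℕ) (y : EuclideanSpace ℝ (Fin n)) (h : ℝ) (hh : 0 ≤ h)
    (hy : ∀ i, |y i| ≤ h) : ‖y‖ ≤ Real.sqrt n * h := by
  rw [EuclideanSpace.norm_eq]
  have hs : ∑ i, ‖y i‖ ^ 2 ≤ n * h ^ 2 := by
    calc ∑ i, ‖y i‖ ^ 2 ≤ ∑ _i : Fin n, h ^ 2 := by
          apply Finset.sum_le_sum; intro i _
          have := hy i
          rw [Real.norm_eq_abs]
          nlinarith [abs_nonneg (y i)]
      _ = n * h ^ 2 := by simp [Finset.sum_const, mul_comm]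
  calc Real.sqrt (∑ i, ‖y i‖ ^ 2) ≤ Real.sqrt (n * h ^ 2) := Real.sqrt_le_sqrt hs
    _ = Real.sqrt n * h := by rw [Real.sqrt_mul (by positivity), Real.sqrt_sq hh]

/-- Grid covering: a subset of the ball of radius `R` can be covered by
`(2M+1)^n` balls of radius `δ`, where `M = ⌈R*(√n+1)/δ⌉₊ + 1`. -/
lemma grid_cover (n : ℕ) (F : Set (EuclideanSpace ℝ (Fin n))) (R : ℝ) (hR : 0 ≤ R)
    (hF : F ⊆ Metric.closedBall 0 R) (δ : ℝ) (hδ : 0 < δ) :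
    ∃ S : Finset (EuclideanSpace ℝ (Fin n)),
      (F ⊆ ⋃ x ∈ S, Metric.ball x δ) ∧
      S.card ≤ (2 * (⌈R * (Real.sqrt n + 1) / δ⌉₊ + 1) + 1) ^ n := by
  classical
  set c : ℝ := Real.sqrt n + 1 with hc
  have hc1 : 1 ≤ c := by
    have : 0 ≤ Real.sqrt n := Real.sqrt_nonneg _
    simp only [hc]; linarith
  have hcpos : 0 < c := lt_of_lt_of_le one_pos hc1
  set h : ℝ := δ / c with hhdef
  have hhpos : 0 < h := div_pos hδ hcpos
  set M : ℕ := ⌈R * c / δ⌉₊ + 1 with hM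
  have hRh : R / h ≤ M := by
    rw [hhdef, div_div_eq_mul_div]
    calc R * c / δ ≤ ⌈R * c / δ⌉₊ := Nat.le_ceil _
      _ ≤ (M : ℝ) := by rw [hM]; push_cast; linarith
  set φ : (Fin n → ℤ) → EuclideanSpace ℝ (Fin n) := fun z => WithLp.toLp 2 (fun i => h * z i) with hφ
  set S : Finset (EuclideanSpace ℝ (Fin n)) :=
    (Fintype.piFinset (fun _ : Fin n => Finset.Icc (-(M:ℤ)) (M:ℤ))).image φ with hS
  refine ⟨S, ?_, ?_⟩
  · intro x hx
    have hxR : ‖x‖ ≤ R := by simpa using hF hx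
    set z : Fin n → ℤ := fun i => ⌊x i / h⌋ with hz
    have hzmem : z ∈ Fintype.piFinset (fun _ : Fin n => Finset.Icc (-(M:ℤ)) (M:ℤ)) := by
      rw [Fintype.mem_piFinset]
      intro i
      have hxi : |x i| ≤ R := le_trans (coord_le_norm n x i) hxR
      have hb : |x i / h| ≤ (M : ℝ) := by
        rw [abs_div, abs_of_pos hhpos]
        calc |x i| / h ≤ R / h := by gcongr
          _ ≤ M := hRh
      rw [Finset.mem_Icc]
      constructor
      · refine Int.le_floor.2 ?_
        have h1 : -((M:ℕ):ℝ) ≤ x i / h := by linarith [abs_le.1 hb]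
        calc ((-(M:ℤ) : ℤ) : ℝ) = -((M:ℕ):ℝ) := by push_cast; ring
          _ ≤ x i / h := h1
      · have : (z i : ℝ) ≤ x i / h := Int.floor_le _
        have h2 : (z i : ℝ) ≤ (M : ℝ) := le_trans this (by linarith [abs_le.1 hb])
        exact_mod_cast h2
    refine Set.mem_biUnion (Finset.mem_image_of_mem φ hzmem) ?_
    rw [Metric.mem_ball, dist_eq_norm]
    have hcoord : ∀ i, |(x - φ z) i| ≤ h := by
      intro i
      have h1 : (x - φ z) i = x i - h * z i := by
        simp [hφ, PiLp.sub_apply]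
      rw [h1]
      have hfl : (⌊x i / h⌋ : ℝ) ≤ x i / h := Int.floor_le _
      have hfl2 : x i / h < ⌊x i / h⌋ + 1 := Int.lt_floor_add_one _
      have e1 : x i - h * z i = h * (x i / h - z i) := by
        field_simp
      rw [e1, abs_mul, abs_of_pos hhpos]
      have : |x i / h - z i| ≤ 1 := by
        rw [abs_le]; constructor <;> [linarith [hfl]; linarith [hfl2]]
      nlinarith [hhpos.le]
    calc ‖x - φ z‖ ≤ Real.sqrt n * h := norm_le_of_coord n _ h hhpos.le hcoord
      _ < c * h := by
          apply mul_lt_mul_of_pos_right _ hhpos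
          rw [hc]; linarith
      _ = δ := by rw [hhdef]; field_simp
  · calc S.card ≤ (Fintype.piFinset (fun _ : Fin n => Finset.Icc (-(M:ℤ)) (M:ℤ))).card :=
          Finset.card_image_le
      _ = (2 * M + 1) ^ n := by
          rw [Fintype.card_piFinset]
          have hcard : (Finset.Icc (-(M:ℤ)) (M:ℤ)).card = 2 * M + 1 := by
            rw [Int.card_Icc]; omega
          simp only [hcard, Finset.prod_const, Finset.card_univ, Fintype.card_fin]
      _ = (2 * (⌈R * (Real.sqrt n + 1) / δ⌉₊ + 1) + 1) ^ n := by rw [hM, hc]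

lemma ratio_bounded (n : ℕ) (F : Set (EuclideanSpace ℝ (Fin n))) (hF : IsBounded F) :
    IsBoundedUnder (· ≤ ·) (𝓝[>] (0:ℝ))
      (fun δ : ℝ => Real.log (covN F δ) / Real.log (1 / δ)) := by
  obtain ⟨R₀, hR₀⟩ := hF.subset_closedBall 0
  set R : ℝ := max R₀ 0 with hRdef
  have hR : 0 ≤ R := le_max_right _ _
  have hFR : F ⊆ Metric.closedBall 0 R :=
    hR₀.trans (Metric.closedBall_subset_closedBall (le_max_left _ _))
  set c : ℝ := Real.sqrt n + 1 with hc
  have hcpos : 0 < c := by positivity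
  set K : ℝ := 2 * R * c + 5 with hK
  have hK5 : 5 ≤ K := by nlinarith [hR, hcpos.le, mul_nonneg hR hcpos.le]
  have hlogK : 0 ≤ Real.log K := Real.log_nonneg (by linarith)
  have hlog2 : 0 < Real.log 2 := Real.log_pos (by norm_num)
  refine ⟨(n : ℝ) * Real.log K / Real.log 2 + n, ?_⟩
  rw [eventually_map]
  filter_upwards [Ioc_mem_nhdsGT_of_mem (α := ℝ) (c := 0) (b := 0) (a := 1/2)
    ⟨le_refl 0, by norm_num⟩] with δ hδ
  obtain ⟨hδ0, hδhalf⟩ := hδ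
  have hδ1 : δ < 1 := lt_of_le_of_lt hδhalf (by norm_num)
  have hlogδ : Real.log 2 ≤ Real.log (1 / δ) := by
    apply Real.log_le_log (by norm_num)
    rw [le_div_iff₀ hδ0]; linarith
  have hlogδpos : 0 < Real.log (1 / δ) := lt_of_lt_of_le hlog2 hlogδ
  by_cases hcov0 : covN F δ = 0
  · rw [hcov0]
    simp only [Nat.cast_zero, Real.log_zero, zero_div]
    positivity
  · -- covN ≥ 1
    obtain ⟨S, hScov, hScard⟩ := grid_cover n F R hR hFR δ hδ0
    have hcovle : (covN F δ : ℝ) ≤ (K / δ) ^ n := by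
      have h1 : covN F δ ≤ (2 * (⌈R * c / δ⌉₊ + 1) + 1) ^ n :=
        le_trans (covN_le_card hScov) hScard
      have h2 : ((2 * (⌈R * c / δ⌉₊ + 1) + 1 : ℕ) : ℝ) ≤ K / δ := by
        push_cast
        have hceil : (⌈R * c / δ⌉₊ : ℝ) ≤ R * c / δ + 1 :=
          le_of_lt (Nat.ceil_lt_add_one (by positivity))
        have h5 : 5 ≤ 5 / δ := by
          rw [le_div_iff₀ hδ0]; linarith
        have : 2 * (R * c / δ) + 5 ≤ K / δ := by
          rw [hK, add_div]
          have e1 : 2 * R * c / δ = 2 * (R * c / δ) := by ring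
          rw [e1]
          linarith
        linarith
      calc (covN F δ : ℝ) ≤ (((2 * (⌈R * c / δ⌉₊ + 1) + 1) ^ n : ℕ) : ℝ) := by
            exact_mod_cast h1
        _ = ((2 * (⌈R * c / δ⌉₊ + 1) + 1 : ℕ) : ℝ) ^ n := by push_cast; ring
        _ ≤ (K / δ) ^ n := by
            apply pow_le_pow_left₀ (by positivity) h2
    have hcov1 : (1:ℝ) ≤ (covN F δ : ℝ) := by
      have : 1 ≤ covN F δ := Nat.one_le_iff_ne_zero.2 hcov0
      exact_mod_cast this
    have hKδ : 1 ≤ K / δ := by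
      rw [le_div_iff₀ hδ0]; linarith
    have hlogcov : Real.log (covN F δ) ≤ (n:ℝ) * (Real.log K + Real.log (1/δ)) := by
      calc Real.log (covN F δ) ≤ Real.log ((K/δ)^n) := Real.log_le_log (by linarith) hcovle
        _ = (n:ℝ) * Real.log (K/δ) := by
            rw [Real.log_pow]
        _ = (n:ℝ) * (Real.log K + Real.log (1/δ)) := by
            rw [Real.log_div (by linarith) (ne_of_gt hδ0),
              Real.log_div one_ne_zero (ne_of_gt hδ0), Real.log_one]
            ring
    rw [div_le_iff₀ hlogδpos]
    have hterm : (n:ℝ) * Real.log K / Real.log 2 * Real.log (1/δ) ≥ (n:ℝ) * Real.log K := by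
      rw [ge_iff_le, div_mul_eq_mul_div, le_div_iff₀ hlog2]
      apply mul_le_mul_of_nonneg_left hlogδ (by positivity)
    nlinarith [hlogcov, hterm, hlogδpos.le]

lemma covN_eventual (n : ℕ) (F : Set (EuclideanSpace ℝ (Fin n))) (hF : IsBounded F)
    {t : ℝ} (ht : 0 < t) (hub : ubDim F < ENNReal.ofReal t) :
    ∀ᶠ δ in 𝓝[>] (0:ℝ), (covN F δ : ℝ) ≤ δ ^ (-t) := by
  have hlim : Filter.limsup (fun δ : ℝ => Real.log (covN F δ) / Real.log (1 / δ))
      (𝓝[>] (0:ℝ)) < t := by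
    rw [ubDim, ENNReal.ofReal_lt_ofReal_iff ht] at hub
    exact hub
  have hev := Filter.eventually_lt_of_limsup_lt hlim (ratio_bounded n F hF)
  filter_upwards [hev, Ioo_mem_nhdsGT_of_mem (α := ℝ) (c := 0) (b := 0) (a := 1)
    ⟨le_refl 0, one_pos⟩] with δ hratio hδ
  obtain ⟨hδ0, hδ1⟩ := hδ
  have hlogδpos : 0 < Real.log (1 / δ) := Real.log_pos (by rw [lt_div_iff₀ hδ0]; linarith)
  by_cases h0 : covN F δ = 0
  · rw [h0]; simp only [Nat.cast_zero]
    positivity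
  · have hcov1 : (1:ℝ) ≤ covN F δ := by exact_mod_cast Nat.one_le_iff_ne_zero.2 h0
    have hlog : Real.log (covN F δ) < t * Real.log (1/δ) := by
      rw [div_lt_iff₀ hlogδpos] at hratio
      exact hratio
    have hrpow : δ ^ (-t) = (1/δ) ^ t := by
      rw [one_div, Real.inv_rpow hδ0.le, ← Real.rpow_neg hδ0.le]
    rw [hrpow]
    have hlogr : t * Real.log (1/δ) = Real.log ((1/δ) ^ t) := by
      rw [Real.log_rpow (by positivity)]
    rw [hlogr] at hlog
    have hx : (covN F δ : ℝ) < (1/δ) ^ t := by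
      by_contra hcon
      push_neg at hcon
      have : Real.log ((1/δ)^t) ≤ Real.log (covN F δ) :=
        Real.log_le_log (by positivity) hcon
      linarith
    linarith

lemma exists_cover_of_measure_zero {X : Type*} [EMetricSpace X] [MeasurableSpace X]
    [BorelSpace X] {U : Set X} {s : ℝ}
    (hU0 : μH[s] U = 0) {ρ : ℝ} (hρ : 0 < ρ) {ε : ℝ≥0∞} (hε : 0 < ε) (hs : 0 < s) :
    ∃ A : ℕ → Set X, (U ⊆ ⋃ j, A j) ∧ (∀ j, EMetric.diam (A j) ≤ ENNReal.ofReal ρ) ∧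
      ∑' j, EMetric.diam (A j) ^ s ≤ ε := by
  have happ := MeasureTheory.Measure.hausdorffMeasure_apply s U
  rw [hU0] at happ
  have hterm : (⨅ (t : ℕ → Set X) (_ : U ⊆ ⋃ n, t n)
      (_ : ∀ n, EMetric.diam (t n) ≤ ENNReal.ofReal ρ),
        ∑' n, ⨆ _ : (t n).Nonempty, EMetric.diam (t n) ^ s) = 0 := by
    refine le_antisymm ?_ zero_le
    rw [happ]
    refine le_iSup₂ (f := fun (r : ℝ≥0∞) (_ : 0 < r) =>
      ⨅ (t : ℕ → Set X) (_ : U ⊆ ⋃ n, t n) (_ : ∀ n, EMetric.diam (t n) ≤ r),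
        ∑' n, ⨆ _ : (t n).Nonempty, EMetric.diam (t n) ^ s)
      (ENNReal.ofReal ρ) (by simpa using hρ)
  have hlt : (⨅ (t : ℕ → Set X) (_ : U ⊆ ⋃ n, t n)
      (_ : ∀ n, EMetric.diam (t n) ≤ ENNReal.ofReal ρ),
        ∑' n, ⨆ _ : (t n).Nonempty, EMetric.diam (t n) ^ s) < ε := by
    rw [hterm]; exact hε
  rw [iInf_lt_iff] at hlt
  obtain ⟨A, hA⟩ := hlt
  rw [iInf_lt_iff] at hA
  obtain ⟨hAcov, hA⟩ := hA
  rw [iInf_lt_iff] at hA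
  obtain ⟨hAdiam, hA⟩ := hA
  refine ⟨A, hAcov, hAdiam, ?_⟩
  refine le_trans (ENNReal.tsum_le_tsum fun j => ?_) hA.le
  by_cases hne : (A j).Nonempty
  · rw [iSup_pos hne]
  · rw [Set.not_nonempty_iff_eq_empty] at hne
    simp [hne, EMetric.diam, Metric.ediam_empty, ENNReal.zero_rpow_of_pos hs, hs]

-- diam of Minkowski sum
lemma diam_add_le {E : Type*} [SeminormedAddCommGroup E] (A B : Set E) :
    EMetric.diam (A + B) ≤ EMetric.diam A + EMetric.diam B := by
  apply EMetric.diam_le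
  rintro x hx y hy
  rw [Set.mem_add] at hx hy
  obtain ⟨a, ha, b, hb, rfl⟩ := hx
  obtain ⟨a', ha', b', hb', rfl⟩ := hy
  calc edist (a + b) (a' + b') ≤ edist a a' + edist b b' := edist_add_add_le _ _ _ _
    _ ≤ EMetric.diam A + EMetric.diam B :=
        add_le_add (EMetric.edist_le_diam_of_mem ha ha') (EMetric.edist_le_diam_of_mem hb hb')

lemma ediam_ball_le {X : Type*} [PseudoMetricSpace X] (x : X) (δ : ℝ) :
    EMetric.diam (Metric.ball x δ) ≤ ENNReal.ofReal (2 * δ) := by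
  apply EMetric.diam_le
  intro a ha b hb
  rw [edist_dist]
  apply ENNReal.ofReal_le_ofReal
  rw [Metric.mem_ball] at ha hb
  calc dist a b ≤ dist a x + dist x b := dist_triangle _ _ _
    _ ≤ 2 * δ := by rw [dist_comm x b]; linarith

lemma key_measure_zero (n : ℕ) (U F : Set (EuclideanSpace ℝ (Fin n)))
    {s' t' : ℝ} (hs' : 0 < s') (ht' : 0 < t')
    (hU0 : μH[s'] U = 0) (hF : IsBounded F) (hub : ubDim F < ENNReal.ofReal t') :
    μH[s' + t'] (U + F) = 0 := by
  classical
  set γ : ℝ := s' + t' with hγ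
  have hγpos : 0 < γ := by positivity
  -- eventual covN bound
  obtain ⟨δ0, hδ0mem, hδ0⟩ := mem_nhdsGT_iff_exists_Ioo_subset.1
    (covN_eventual n F hF ht' hub)
  have hδ0pos : 0 < δ0 := hδ0mem
  -- the scales
  set δ1 : ℝ := min δ0 1 with hδ1def
  have hδ1pos : 0 < δ1 := lt_min hδ0pos one_pos
  set ρ : ℕ → ℝ := fun m => δ1 * (1/2) ^ (m + 1) with hρdef
  have hρpos : ∀ m, 0 < ρ m := fun m => by positivity
  have hρltδ0 : ∀ m, ρ m < δ0 := by
    intro m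
    have h1 : (1/2:ℝ) ^ (m+1) ≤ 1/2 := by
      apply pow_le_of_le_one (by norm_num) (by norm_num) (by omega)
    calc ρ m ≤ δ1 * (1/2) := by
          apply mul_le_mul_of_nonneg_left h1 hδ1pos.le
      _ < δ1 := by linarith
      _ ≤ δ0 := min_le_left _ _
  -- covers of U at scale ρ m with small sums
  have hexA : ∀ m : ℕ, ∃ A : ℕ → Set (EuclideanSpace ℝ (Fin n)), (U ⊆ ⋃ j, A j) ∧
      (∀ j, EMetric.diam (A j) ≤ ENNReal.ofReal (ρ m)) ∧
      ∑' j, EMetric.diam (A j) ^ s' ≤ ENNReal.ofReal ((ρ m) ^ s') := by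
    intro m
    exact exists_cover_of_measure_zero hU0 (hρpos m)
      (by positivity : (0:ℝ≥0∞) < ENNReal.ofReal ((ρ m) ^ s')) hs'
  choose A hAcov hAdiam hAsum using hexA
  -- the radii
  set δs : ℕ → ℕ → ℝ := fun m j =>
    max (EMetric.diam (A m j)).toReal (ρ m * (1/2) ^ (j + 1)) with hδsdef
  have hδspos : ∀ m j, 0 < δs m j := fun m j =>
    lt_max_of_lt_right (by positivity)
  have hdiamle : ∀ m j, (EMetric.diam (A m j)).toReal ≤ ρ m := by
    intro m j
    exact ENNReal.toReal_le_of_le_ofReal (hρpos m).le (hAdiam m j)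
  have hδsle : ∀ m j, δs m j ≤ ρ m := by
    intro m j
    apply max_le (hdiamle m j)
    calc ρ m * (1/2)^(j+1) ≤ ρ m * 1 := by
          apply mul_le_mul_of_nonneg_left _ (hρpos m).le
          apply pow_le_one₀ (by norm_num) (by norm_num)
      _ = ρ m := mul_one _
  have hcovle : ∀ m j, (covN F (δs m j) : ℝ) ≤ (δs m j) ^ (-t') := by
    intro m j
    exact hδ0 ⟨hδspos m j, lt_of_le_of_lt (hδsle m j) (hρltδ0 m)⟩
  -- the ball covers of F
  have hexS : ∀ m j, ∃ S : Finset (EuclideanSpace ℝ (Fin n)), S.card = covN F (δs m j) ∧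
      F ⊆ ⋃ x ∈ S, Metric.ball x (δs m j) := fun m j => covN_realize hF (hδspos m j)
  choose S hScard hScov using hexS
  -- the covering family
  set t : ℕ → ℕ × ℕ → Set (EuclideanSpace ℝ (Fin n)) := fun m p =>
    if p.2 < (S m p.1).card then
      A m p.1 + Metric.ball ((S m p.1).toList.getD p.2 0) (δs m p.1)
    else ∅ with htdef
  have hdiam_t : ∀ m p, EMetric.diam (t m p) ≤ ENNReal.ofReal (3 * ρ m) := by
    intro m p
    simp only [htdef]
    by_cases hp : p.2 < (S m p.1).card
    · rw [if_pos hp]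
      calc EMetric.diam (A m p.1 + Metric.ball _ (δs m p.1))
          ≤ EMetric.diam (A m p.1) + EMetric.diam (Metric.ball ((S m p.1).toList.getD p.2 0) (δs m p.1)) :=
            diam_add_le _ _
        _ ≤ ENNReal.ofReal (ρ m) + ENNReal.ofReal (2 * δs m p.1) :=
            add_le_add (hAdiam m p.1) (ediam_ball_le _ _)
        _ ≤ ENNReal.ofReal (ρ m) + ENNReal.ofReal (2 * ρ m) := by
            apply add_le_add_right
            apply ENNReal.ofReal_le_ofReal
            linarith [hδsle m p.1]
        _ = ENNReal.ofReal (3 * ρ m) := by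
            rw [← ENNReal.ofReal_add (hρpos m).le (by positivity)]
            congr 1; ring
    · rw [if_neg hp]
      simp [EMetric.diam]
  have hcover : ∀ m, U + F ⊆ ⋃ p : ℕ × ℕ, t m p := by
    intro m x hx
    rw [Set.mem_add] at hx
    obtain ⟨u, hu, f, hf, rfl⟩ := hx
    obtain ⟨j, hj⟩ := Set.mem_iUnion.1 (hAcov m hu)
    have hfS := hScov m j hf
    rw [Set.mem_iUnion₂] at hfS
    obtain ⟨y, hyS, hfy⟩ := hfS
    obtain ⟨k, hk, hky⟩ := List.mem_iff_getElem.1 (Finset.mem_toList.2 hyS)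
    rw [Finset.length_toList] at hk
    refine Set.mem_iUnion.2 ⟨(j, k), ?_⟩
    simp only [htdef]
    rw [if_pos hk]
    have hgetD : (S m j).toList.getD k 0 = y := by
      rw [List.getD_eq_getElem _ _ (by rw [Finset.length_toList]; exact hk)]
      exact hky
    rw [hgetD]
    exact Set.add_mem_add hj hfy
  -- the sum bound
  set w : ℝ≥0∞ := ENNReal.ofReal ((1/2 : ℝ) ^ s') with hwdef
  have hw1 : w < 1 := by
    rw [hwdef]
    apply ENNReal.ofReal_lt_one.2
    exact Real.rpow_lt_one (by norm_num) (by norm_num) hs'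
  set C : ℝ≥0∞ := w * (1 - w)⁻¹ with hCdef
  have hCfin : C ≠ ∞ := by
    apply ENNReal.mul_ne_top ENNReal.ofReal_ne_top
    simp only [ne_eq, ENNReal.inv_eq_top]
    intro h
    rw [tsub_eq_zero_iff_le] at h
    exact absurd h (not_le.2 hw1)
  have hsum : ∀ m, ∑' p : ℕ × ℕ, EMetric.diam (t m p) ^ γ ≤
      ENNReal.ofReal (3 ^ γ) * ENNReal.ofReal ((ρ m) ^ s') * (1 + C) := by
    intro m
    rw [ENNReal.tsum_prod']
    have hinner : ∀ j, ∑' k : ℕ, EMetric.diam (t m (j, k)) ^ γ ≤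
        ENNReal.ofReal (3 ^ γ) *
          (EMetric.diam (A m j) ^ s' + ENNReal.ofReal ((ρ m * (1/2)^(j+1)) ^ s')) := by
      intro j
      have hzero : ∀ k ∉ Finset.range (S m j).card, EMetric.diam (t m (j, k)) ^ γ = 0 := by
        intro k hk
        rw [Finset.mem_range, not_lt] at hk
        simp only [htdef]
        rw [if_neg (not_lt.2 hk)]
        rw [EMetric.diam, EMetric.diam_empty, ENNReal.zero_rpow_of_pos hγpos]
      rw [tsum_eq_sum hzero]
      have hterm : ∀ k ∈ Finset.range (S m j).card,
          EMetric.diam (t m (j, k)) ^ γ ≤ ENNReal.ofReal ((3 * δs m j) ^ γ) := by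
        intro k hk
        rw [Finset.mem_range] at hk
        have hA' : EMetric.diam (A m j) ≤ ENNReal.ofReal (δs m j) := by
          have : EMetric.diam (A m j) ≠ ∞ :=
            ne_top_of_le_ne_top ENNReal.ofReal_ne_top (hAdiam m j)
          calc EMetric.diam (A m j) = ENNReal.ofReal (EMetric.diam (A m j)).toReal :=
                (ENNReal.ofReal_toReal this).symm
            _ ≤ ENNReal.ofReal (δs m j) := ENNReal.ofReal_le_ofReal (le_max_left _ _)
        have hdt : EMetric.diam (t m (j, k)) ≤ ENNReal.ofReal (3 * δs m j) := by
          simp only [htdef]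
          rw [if_pos hk]
          calc EMetric.diam (A m j + Metric.ball _ _)
              ≤ EMetric.diam (A m j) + EMetric.diam (Metric.ball ((S m j).toList.getD k 0) (δs m j)) :=
                diam_add_le _ _
            _ ≤ ENNReal.ofReal (δs m j) + ENNReal.ofReal (2 * δs m j) :=
                add_le_add hA' (ediam_ball_le _ _)
            _ = ENNReal.ofReal (3 * δs m j) := by
                rw [← ENNReal.ofReal_add (hδspos m j).le (by positivity)]
                congr 1; ring
        calc EMetric.diam (t m (j, k)) ^ γ ≤ (ENNReal.ofReal (3 * δs m j)) ^ γ :=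
              ENNReal.rpow_le_rpow hdt hγpos.le
          _ = ENNReal.ofReal ((3 * δs m j) ^ γ) :=
              ENNReal.ofReal_rpow_of_pos (by positivity)
      calc ∑ k ∈ Finset.range (S m j).card, EMetric.diam (t m (j, k)) ^ γ
          ≤ ∑ _k ∈ Finset.range (S m j).card, ENNReal.ofReal ((3 * δs m j) ^ γ) :=
            Finset.sum_le_sum hterm
        _ = ((S m j).card : ℝ≥0∞) * ENNReal.ofReal ((3 * δs m j) ^ γ) := by
            rw [Finset.sum_const, Finset.card_range, nsmul_eq_mul]
        _ ≤ ENNReal.ofReal ((δs m j) ^ (-t')) * ENNReal.ofReal ((3 * δs m j) ^ γ) := by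
            apply mul_le_mul_left
            rw [← ENNReal.ofReal_natCast]
            apply ENNReal.ofReal_le_ofReal
            rw [hScard m j]
            exact hcovle m j
        _ = ENNReal.ofReal ((δs m j) ^ (-t') * (3 * δs m j) ^ γ) :=
            (ENNReal.ofReal_mul (by positivity)).symm
        _ = ENNReal.ofReal (3 ^ γ * (δs m j) ^ s') := by
            congr 1
            rw [Real.mul_rpow (by norm_num) (hδspos m j).le]
            rw [← mul_assoc, mul_comm ((δs m j) ^ (-t')) ((3:ℝ) ^ γ), mul_assoc]
            congr 1
            rw [← Real.rpow_add (hδspos m j)]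
            congr 1
            rw [hγ]; ring
        _ = ENNReal.ofReal (3 ^ γ) * ENNReal.ofReal ((δs m j) ^ s') :=
            ENNReal.ofReal_mul (by positivity)
        _ ≤ ENNReal.ofReal (3 ^ γ) *
            (EMetric.diam (A m j) ^ s' + ENNReal.ofReal ((ρ m * (1/2)^(j+1)) ^ s')) := by
            apply mul_le_mul_right
            have hmax : (δs m j) ^ s' ≤ (EMetric.diam (A m j)).toReal ^ s'
                + (ρ m * (1/2)^(j+1)) ^ s' := by
              have h1 : δs m j = max (EMetric.diam (A m j)).toReal (ρ m * (1/2)^(j+1)) := rfl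
              rcases max_cases (EMetric.diam (A m j)).toReal (ρ m * (1/2)^(j+1)) with
                ⟨heq, _⟩ | ⟨heq, _⟩ <;> rw [h1, heq]
              · have : (0:ℝ) ≤ (ρ m * (1/2)^(j+1)) ^ s' := by positivity
                linarith
              · have : (0:ℝ) ≤ (EMetric.diam (A m j)).toReal ^ s' :=
                  Real.rpow_nonneg ENNReal.toReal_nonneg _
                linarith
            calc ENNReal.ofReal ((δs m j) ^ s')
                ≤ ENNReal.ofReal ((EMetric.diam (A m j)).toReal ^ s'
                    + (ρ m * (1/2)^(j+1)) ^ s') := ENNReal.ofReal_le_ofReal hmax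
              _ ≤ EMetric.diam (A m j) ^ s' + ENNReal.ofReal ((ρ m * (1/2)^(j+1)) ^ s') := by
                  rw [ENNReal.ofReal_add (Real.rpow_nonneg ENNReal.toReal_nonneg _)
                    (by positivity)]
                  apply add_le_add_left
                  by_cases hd0 : EMetric.diam (A m j) = 0
                  · rw [hd0]
                    simp [Real.zero_rpow (ne_of_gt hs'), ENNReal.zero_rpow_of_pos hs']
                  · have hfin : EMetric.diam (A m j) ≠ ∞ :=
                      ne_top_of_le_ne_top ENNReal.ofReal_ne_top (hAdiam m j)
                    have hpos : 0 < (EMetric.diam (A m j)).toReal :=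
                      ENNReal.toReal_pos hd0 hfin
                    rw [← ENNReal.ofReal_rpow_of_pos hpos]
                    rw [ENNReal.ofReal_toReal hfin]
    -- now sum over j
    have hx : ∀ j : ℕ, ((1/2:ℝ)^(j+1)) ^ s' = ((1/2:ℝ)^s')^(j+1) := by
      intro j
      rw [← Real.rpow_natCast (1/2:ℝ) (j+1), ← Real.rpow_mul (by norm_num), mul_comm,
        Real.rpow_mul (by norm_num), Real.rpow_natCast]
    have hsecond : ∀ j : ℕ, ENNReal.ofReal ((ρ m * (1/2)^(j+1)) ^ s')
        = ENNReal.ofReal ((ρ m) ^ s') * w ^ (j+1) := by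
      intro j
      rw [Real.mul_rpow (hρpos m).le (by positivity), hx j,
        ENNReal.ofReal_mul (by positivity), hwdef, ENNReal.ofReal_pow (by positivity)]
    calc ∑' j, ∑' k, EMetric.diam (t m (j, k)) ^ γ
        ≤ ∑' j : ℕ, ENNReal.ofReal (3 ^ γ) *
            (EMetric.diam (A m j) ^ s' + ENNReal.ofReal ((ρ m * (1/2)^(j+1)) ^ s')) :=
          ENNReal.tsum_le_tsum hinner
      _ = ENNReal.ofReal (3 ^ γ) * ∑' j : ℕ,
            (EMetric.diam (A m j) ^ s' + ENNReal.ofReal ((ρ m * (1/2)^(j+1)) ^ s')) :=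
          ENNReal.tsum_mul_left
      _ = ENNReal.ofReal (3 ^ γ) * (∑' j : ℕ, EMetric.diam (A m j) ^ s'
            + ∑' j : ℕ, ENNReal.ofReal ((ρ m * (1/2)^(j+1)) ^ s')) := by
          rw [ENNReal.tsum_add]
      _ ≤ ENNReal.ofReal (3 ^ γ) * (ENNReal.ofReal ((ρ m) ^ s')
            + ENNReal.ofReal ((ρ m) ^ s') * C) := by
          apply mul_le_mul_right
          apply add_le_add (hAsum m)
          have : ∑' j : ℕ, ENNReal.ofReal ((ρ m * (1/2)^(j+1)) ^ s')
              = ENNReal.ofReal ((ρ m) ^ s') * ∑' j : ℕ, w ^ (j+1) := by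
            simp only [hsecond]
            rw [ENNReal.tsum_mul_left]
          rw [this, ENNReal.tsum_geometric_add_one, ← hCdef]
      _ = ENNReal.ofReal (3 ^ γ) * ENNReal.ofReal ((ρ m) ^ s') * (1 + C) := by ring
  -- conclude via liminf
  have hr : Filter.Tendsto (fun m : ℕ => ENNReal.ofReal (3 * ρ m)) Filter.atTop (𝓝 0) := by
    have h2 : Filter.Tendsto (fun m : ℕ => (1/2:ℝ)^m) Filter.atTop (𝓝 0) :=
      tendsto_pow_atTop_nhds_zero_of_lt_one (by norm_num) (by norm_num)
    have h3 : Filter.Tendsto (fun m : ℕ => 3 * ρ m) Filter.atTop (𝓝 0) := by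
      have h4 := h2.const_mul (3 * δ1 * (1/2))
      rw [mul_zero] at h4
      convert h4 using 1
      funext m
      show 3 * (δ1 * (1/2)^(m+1)) = 3 * δ1 * (1/2) * (1/2)^m
      ring
    have := ENNReal.tendsto_ofReal h3
    rwa [ENNReal.ofReal_zero] at this
  have hle := MeasureTheory.Measure.hausdorffMeasure_le_liminf_tsum (s' + t') (U + F)
    (fun m => ENNReal.ofReal (3 * ρ m)) hr t
    (Filter.Eventually.of_forall (fun m => hdiam_t m))
    (Filter.Eventually.of_forall hcover)
  refine le_antisymm ?_ zero_le
  refine le_trans hle ?_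
  have hlimT : Filter.Tendsto
      (fun m : ℕ => ENNReal.ofReal (3 ^ γ) * ENNReal.ofReal ((ρ m) ^ s') * (1 + C))
      Filter.atTop (𝓝 0) := by
    have hx : ∀ m : ℕ, ((1/2:ℝ)^(m+1)) ^ s' = ((1/2:ℝ)^s')^(m+1) := by
      intro m
      rw [← Real.rpow_natCast (1/2:ℝ) (m+1), ← Real.rpow_mul (by norm_num), mul_comm,
        Real.rpow_mul (by norm_num), Real.rpow_natCast]
    have hTm : ∀ m : ℕ, ENNReal.ofReal (3 ^ γ) * ENNReal.ofReal ((ρ m) ^ s') * (1 + C)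
        = (ENNReal.ofReal (3 ^ γ) * ENNReal.ofReal (δ1 ^ s') * (1 + C)) * w ^ (m+1) := by
      intro m
      have : ENNReal.ofReal ((ρ m) ^ s')
          = ENNReal.ofReal (δ1 ^ s') * w ^ (m+1) := by
        show ENNReal.ofReal ((δ1 * (1/2)^(m+1)) ^ s') = _
        rw [Real.mul_rpow hδ1pos.le (by positivity), hx m,
          ENNReal.ofReal_mul (by positivity), hwdef, ENNReal.ofReal_pow (by positivity)]
      rw [this]; ring
    simp only [hTm]
    have hpow : Filter.Tendsto (fun m : ℕ => w ^ (m+1)) Filter.atTop (𝓝 0) := by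
      have := ENNReal.tendsto_pow_atTop_nhds_zero_of_lt_one hw1
      exact this.comp (Filter.tendsto_add_atTop_nat 1)
    have hane : ENNReal.ofReal (3 ^ γ) * ENNReal.ofReal (δ1 ^ s') * (1 + C) ≠ ∞ := by
      apply ENNReal.mul_ne_top
      · exact ENNReal.mul_ne_top ENNReal.ofReal_ne_top ENNReal.ofReal_ne_top
      · exact ENNReal.add_ne_top.2 ⟨ENNReal.one_ne_top, hCfin⟩
    have := ENNReal.Tendsto.const_mul hpow (Or.inr hane)
    rwa [mul_zero] at this
  calc Filter.liminf (fun m : ℕ => ∑' p : ℕ × ℕ, EMetric.diam (t m p) ^ (s' + t')) Filter.atTop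
      ≤ Filter.liminf
          (fun m : ℕ => ENNReal.ofReal (3 ^ γ) * ENNReal.ofReal ((ρ m) ^ s') * (1 + C))
          Filter.atTop := Filter.liminf_le_liminf (Filter.Eventually.of_forall hsum)
    _ = 0 := hlimT.liminf_eq

lemma key_dimH_add (n : ℕ) (U F : Set (EuclideanSpace ℝ (Fin n))) (hF : IsBounded F) :
    dimH (U + F) ≤ dimH U + ubDim F := by
  refine dimH_le fun d' hd' => ?_
  by_contra hcon
  push_neg at hcon
  have hd'fin : (d' : ℝ≥0∞) ≠ ∞ := ENNReal.coe_ne_top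
  have ha : dimH U ≠ ∞ :=
    ne_top_of_le_ne_top (ne_top_of_lt hcon) (le_add_right le_rfl)
  have hb : ubDim F ≠ ∞ :=
    ne_top_of_le_ne_top (ne_top_of_lt hcon) (le_add_left le_rfl)
  set α : ℝ := (dimH U).toReal with hα
  set β : ℝ := (ubDim F).toReal with hβ
  have hα0 : 0 ≤ α := ENNReal.toReal_nonneg
  have hβ0 : 0 ≤ β := ENNReal.toReal_nonneg
  have hαβ : α + β < (d' : ℝ) := by
    have h1 : (dimH U + ubDim F).toReal < ((d' : ℝ≥0∞)).toReal :=
      (ENNReal.toReal_lt_toReal (ENNReal.add_ne_top.2 ⟨ha, hb⟩) hd'fin).2 hcon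
    rwa [ENNReal.toReal_add ha hb, ENNReal.coe_toReal] at h1
  set κ : ℝ := ((d' : ℝ) - α - β) / 2 with hκdef
  have hκ : 0 < κ := by rw [hκdef]; linarith
  set s' : ℝ := α + κ with hs'def
  set t' : ℝ := β + κ with ht'def
  have hs' : 0 < s' := by rw [hs'def]; linarith
  have ht' : 0 < t' := by rw [ht'def]; linarith
  have hdimlt : dimH U < ENNReal.ofReal s' := by
    rw [← ENNReal.ofReal_toReal ha, ← hα]
    exact (ENNReal.ofReal_lt_ofReal_iff hs').2 (by rw [hs'def]; linarith)
  have hublt : ubDim F < ENNReal.ofReal t' := by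
    rw [← ENNReal.ofReal_toReal hb, ← hβ]
    exact (ENNReal.ofReal_lt_ofReal_iff ht').2 (by rw [ht'def]; linarith)
  have hU0 : μH[s'] U = 0 := by
    have h0 : dimH U < ((s'.toNNReal : ℝ≥0) : ℝ≥0∞) := by
      have : ENNReal.ofReal s' = ((s'.toNNReal : ℝ≥0) : ℝ≥0∞) := rfl
      rwa [this] at hdimlt
    have h1 := hausdorffMeasure_of_dimH_lt h0
    rwa [Real.coe_toNNReal s' hs'.le] at h1
  have hzero := key_measure_zero n U F hs' ht' hU0 hF hublt
  have hexp : ((d' : ℝ≥0) : ℝ) = s' + t' := by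
    rw [hs'def, ht'def, hκdef]; ring
  rw [hexp] at hd'
  rw [hd'] at hzero
  exact ENNReal.top_ne_zero hzero

/-- `dim_H (U + V) ≤ dim_H U + dim_P V` for Borel sets. -/
theorem stmt3 (n : ℕ) (U V : Set (EuclideanSpace ℝ (Fin n)))
    (hU : MeasurableSet U) (hV : MeasurableSet V) :
    dimH (U + V) ≤ dimH U + packDim V := by
  rw [packDim, ENNReal.add_iInf]
  refine le_iInf fun F => ?_
  rw [ENNReal.add_iInf]
  refine le_iInf fun hcov => ?_
  rw [ENNReal.add_iInf]
  refine le_iInf fun hbd => ?_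
  have hsub : U + V ⊆ ⋃ i, (U + F i) := by
    rintro x hx
    rw [Set.mem_add] at hx
    obtain ⟨u, hu, v, hv, rfl⟩ := hx
    obtain ⟨i, hi⟩ := Set.mem_iUnion.1 (hcov hv)
    exact Set.mem_iUnion.2 ⟨i, Set.add_mem_add hu hi⟩
  calc dimH (U + V) ≤ dimH (⋃ i, (U + F i)) := dimH_mono hsub
    _ = ⨆ i, dimH (U + F i) := dimH_iUnion _
    _ ≤ ⨆ i, (dimH U + ubDim (F i)) :=
        iSup_mono fun i => key_dimH_add n U (F i) (hbd i)
    _ ≤ dimH U + ⨆ i, ubDim (F i) :=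
        iSup_le fun i => add_le_add le_rfl (le_iSup (fun i => ubDim (F i)) i)
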